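/- Inverse transformation identity for Burkholder functionals: define B_p(A) = ((p/2)det A + (1−p/2)|A|²)|A|^{p−2} for p ≥ 1 and B_p(A) = ((p/2)|A|² + (1−p/2)det A)·|A|^{−p}·(det A)^{p−1} for p ≤ 1, on matrices A with det A > 0. Then for the inverse transform Ê(A) := E(A^{−1})·det A one has B̂_p = B_q whenever p + q = 2; i.e. B_p(A^{−1})·det A = B_{2−p}(A) for all invertible 2×2 matrices A with det A > 0. -/

import Mathlib

/-- The operator norm of a 2×2 real matrix, acting on Euclidean space. -/
noncomputable def opNorm (A : Matrix (Fin 2) (Fin 2) ℝ) : ℝ :=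
  ‖LinearMap.toContinuousLinearMap (Matrix.toEuclideanLin A)‖

/-- The extended Burkholder functional: for `p ≥ 1`,
`B_p(A) = ((p/2)det A + (1−p/2)|A|²)|A|^{p−2}`, and for `p ≤ 1` (on `det A > 0`),
`B_p(A) = ((p/2)|A|² + (1−p/2)det A)·|A|^{−p}·(det A)^{p−1}`. -/
noncomputable def burkholderExt (p : ℝ) (A : Matrix (Fin 2) (Fin 2) ℝ) : ℝ :=
  if 1 ≤ p then
    ((p / 2) * A.det + (1 - p / 2) * opNorm A ^ 2) * opNorm A ^ (p - 2)
  else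
    ((p / 2) * opNorm A ^ 2 + (1 - p / 2) * A.det) * opNorm A ^ (-p) * A.det ^ (p - 1)

/-!
In dimension two the adjugate is the transpose conjugated by a quarter turn, so `‖A⁻¹‖ = ‖A‖ / det A`
and `det A⁻¹ = 1 / det A`: both functionals only see the pair `(‖A‖, det A)`, and inversion acts on
it by the involution `(N, d) ↦ (N / d, 1 / d)`. Under this substitution the formula for `B_p` on
`p ≤ 1`, multiplied by `d`, becomes the formula for `B_{2-p}` on `2 - p ≥ 1`; applying the involution
once more gives the other direction, and at `p = 1` the two formulas agree.
-/

open scoped Matrix Matrix.Norms.L2Operator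

namespace Matrix

def quarterTurn {R : Type*} [Ring R] : Matrix (Fin 2) (Fin 2) R := !![0, 1; -1, 0]

theorem quarterTurn_mem_unitary : (quarterTurn : Matrix (Fin 2) (Fin 2) ℝ) ∈ unitary _ := by
  rw [← unitaryGroup, mem_unitaryGroup_iff, star_eq_conjTranspose]
  ext i j
  fin_cases i <;> fin_cases j <;> simp [quarterTurn, mul_apply, Fin.sum_univ_two]

theorem adjugate_fin_two_eq_quarterTurn_mul {R : Type*} [CommRing R]
    (A : Matrix (Fin 2) (Fin 2) R) : A.adjugate = quarterTurn * Aᵀ * quarterTurnᵀ := by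
  ext i j
  fin_cases i <;> fin_cases j <;>
    simp [quarterTurn, adjugate_fin_two, mul_apply, Fin.sum_univ_two, vecMul, dotProduct]

theorem l2_opNorm_adjugate_fin_two (A : Matrix (Fin 2) (Fin 2) ℝ) : ‖A.adjugate‖ = ‖A‖ := by
  have hJt : (quarterTurn : Matrix (Fin 2) (Fin 2) ℝ)ᵀ ∈ unitary _ := by
    simpa [star_eq_conjTranspose] using Unitary.star_mem quarterTurn_mem_unitary
  rw [adjugate_fin_two_eq_quarterTurn_mul, CStarRing.norm_mul_mem_unitary _ hJt,
    CStarRing.norm_mem_unitary_mul _ quarterTurn_mem_unitary,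
    ← conjTranspose_eq_transpose_of_trivial, l2_opNorm_conjTranspose]

theorem l2_opNorm_inv_fin_two (A : Matrix (Fin 2) (Fin 2) ℝ) : ‖A⁻¹‖ = ‖A‖ / |A.det| := by
  rw [inv_def, Ring.inverse_eq_inv', norm_smul, l2_opNorm_adjugate_fin_two, Real.norm_eq_abs,
    abs_inv, div_eq_inv_mul]

end Matrix

theorem opNorm_inv (A : Matrix (Fin 2) (Fin 2) ℝ) : opNorm A⁻¹ = opNorm A / |A.det| :=
  Matrix.l2_opNorm_inv_fin_two A

theorem opNorm_pos_of_det_ne_zero {A : Matrix (Fin 2) (Fin 2) ℝ} (hA : A.det ≠ 0) :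
    0 < opNorm A :=
  show 0 < ‖A‖ from norm_pos_iff.mpr fun h => hA (by rw [h, Matrix.det_zero])

section Scalar

noncomputable def burkholderUpper (p N d : ℝ) : ℝ :=
  ((p / 2) * d + (1 - p / 2) * N ^ 2) * N ^ (p - 2)

noncomputable def burkholderLower (p N d : ℝ) : ℝ :=
  ((p / 2) * N ^ 2 + (1 - p / 2) * d) * N ^ (-p) * d ^ (p - 1)

noncomputable def burkholderScalar (p N d : ℝ) : ℝ :=
  if 1 ≤ p then burkholderUpper p N d else burkholderLower p N d

theorem burkholderExt_eq_burkholderScalar (p : ℝ) (A : Matrix (Fin 2) (Fin 2) ℝ) :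
    burkholderExt p A = burkholderScalar p (opNorm A) A.det :=
  rfl

theorem burkholderLower_one (N d : ℝ) : burkholderLower 1 N d = burkholderUpper 1 N d := by
  norm_num [burkholderLower, burkholderUpper, add_comm]

variable {N d : ℝ}

theorem burkholderLower_inv_mul (p : ℝ) (hN : 0 < N) (hd : 0 < d) :
    burkholderLower p (N / d) d⁻¹ * d = burkholderUpper (2 - p) N d := by
  unfold burkholderLower burkholderUpper
  rw [Real.div_rpow hN.le hd.le, Real.inv_rpow hd.le, Real.rpow_neg hd.le, Real.rpow_sub_one hd.ne',
    show 2 - p - 2 = -p by ring]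
  field_simp
  ring

theorem burkholderUpper_inv_mul (p : ℝ) (hN : 0 < N) (hd : 0 < d) :
    burkholderUpper p (N / d) d⁻¹ * d = burkholderLower (2 - p) N d := by
  have h := burkholderLower_inv_mul (2 - p) (div_pos hN hd) (inv_pos.mpr hd)
  rw [div_inv_eq_mul, div_mul_cancel₀ _ hd.ne', inv_inv, sub_sub_cancel] at h
  rw [← h, mul_assoc, inv_mul_cancel₀ hd.ne', mul_one]

theorem burkholderScalar_inv_mul (p : ℝ) (hN : 0 < N) (hd : 0 < d) :
    burkholderScalar p (N / d) d⁻¹ * d = burkholderScalar (2 - p) N d := by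
  unfold burkholderScalar
  by_cases hp : 1 ≤ p
  · rw [if_pos hp, burkholderUpper_inv_mul p hN hd]
    split_ifs with hq
    · rw [show 2 - p = 1 by linarith, burkholderLower_one]
    · rfl
  · rw [if_neg hp, if_pos (by linarith), burkholderLower_inv_mul p hN hd]

end Scalar

/-- **Inverse transformation identity** for the Burkholder functionals: with
`Ê(A) := E(A⁻¹)·det A`, one has `B̂_p = B_{2−p}` on matrices with positive
determinant, i.e. `B_p(A⁻¹)·det A = B_{2−p}(A)`. -/
theorem burkholder_inverse_transform (p : ℝ) (A : Matrix (Fin 2) (Fin 2) ℝ)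
    (hA : 0 < A.det) :
    burkholderExt p A⁻¹ * A.det = burkholderExt (2 - p) A := by
  have hdet : A⁻¹.det = A.det⁻¹ := by rw [Matrix.det_nonsing_inv, Ring.inverse_eq_inv']
  rw [burkholderExt_eq_burkholderScalar, burkholderExt_eq_burkholderScalar, opNorm_inv,
    abs_of_pos hA, hdet]
  exact burkholderScalar_inv_mul p (opNorm_pos_of_det_ne_zero hA.ne') hA
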